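/- Let f : ℂ → ℂⁿ be holomorphic with f(0) = x, and suppose h is a continuous Hermitian pseudo-metric pulled back so that f*ω = μ(z)·(i/2)dz∧dz̄ with μ ≥ 0 continuous. If A(r) := ∫_{D_r} μ dλ satisfies both A(r) ≥ (1/(2πC²))∫_0^r A(t)²/t dt and A(r) < ∞ for all r, then A ≡ 0. -/

import Mathlib

open MeasureTheory Real

/-- Length-area/integral inequality in the proof that SKT hyperbolic implies Brody
hyperbolic: if `A(r) = ∫_{D_r} μ dλ` (with `μ ≥ 0` continuous) satisfies
`A(r) ≥ (1/(2πC²))·∫_0^r A(t)²/t dt` for all `r > 0`, and these integrals are finite,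
then `A ≡ 0`. -/
theorem area_eq_zero_of_isoperimetric_ineq
    (μ : ℂ → ℝ) (hμc : Continuous μ) (hμ0 : ∀ z, 0 ≤ μ z)
    (C : ℝ) (hC : 0 < C)
    (A : ℝ → ℝ) (hA : ∀ r, A r = ∫ z in Metric.ball (0 : ℂ) r, μ z)
    (hint : ∀ r > 0, IntervalIntegrable (fun t => (A t) ^ 2 / t) volume 0 r)
    (hineq : ∀ r > 0, (1 / (2 * π * C ^ 2)) * ∫ t in (0 : ℝ)..r, (A t) ^ 2 / t ≤ A r) :
    ∀ r > 0, A r = 0 := by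
  intro r hr
  set κ : ℝ := 1 / (2 * π * C ^ 2) with hκdef
  have hπ := Real.pi_pos
  have hκ : 0 < κ := by positivity
  have hAnn : ∀ s, 0 ≤ A s := by
    intro s
    rw [hA]
    exact setIntegral_nonneg measurableSet_ball fun z _ => hμ0 z
  have hAmono : Monotone A := by
    intro s t hst
    rw [hA, hA]
    exact setIntegral_mono_set
      (((hμc.continuousOn).integrableOn_compact (isCompact_closedBall (0:ℂ) t)).mono_set
        Metric.ball_subset_closedBall)
      (Filter.Eventually.of_forall fun z => hμ0 z)
      ((Metric.ball_subset_ball hst).eventuallyLE)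
  set F : ℝ → ℝ := fun s => ∫ t in (0:ℝ)..s, A t ^ 2 / t with hFdef
  have hFnn : ∀ s, 0 < s → 0 ≤ F s := fun s hs =>
    intervalIntegral.integral_nonneg hs.le fun t ht => div_nonneg (sq_nonneg _) ht.1
  have hII : ∀ a b : ℝ, 0 < a → a ≤ b →
      IntervalIntegrable (fun t => A t ^ 2 / t) volume a b := by
    intro a b ha hab
    exact (hint b (ha.trans_le hab)).mono_set
      (Set.uIcc_subset_uIcc
        (Set.mem_uIcc.mpr (Or.inl ⟨ha.le, hab⟩))
        (Set.mem_uIcc.mpr (Or.inl ⟨ha.le.trans hab, le_refl b⟩)))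
  have hsplit : ∀ a b : ℝ, 0 < a → a ≤ b →
      F b = F a + ∫ t in a..b, A t ^ 2 / t := by
    intro a b ha hab
    rw [hFdef]
    exact (intervalIntegral.integral_add_adjacent_intervals (hint a ha) (hII a b ha hab)).symm
  have hFmono : ∀ a b : ℝ, 0 < a → a ≤ b → F a ≤ F b := by
    intro a b ha hab
    rw [hsplit a b ha hab]
    have h0 : 0 ≤ ∫ t in a..b, A t ^ 2 / t :=
      intervalIntegral.integral_nonneg hab fun t ht =>
        div_nonneg (sq_nonneg _) (ha.le.trans ht.1)
    linarith
  -- key lower bound on integrals of A^2/t by constants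
  have hlow : ∀ (c a b : ℝ), 0 < a → a ≤ b → 0 ≤ c →
      (∀ t ∈ Set.Icc a b, c ≤ A t) →
      c ^ 2 * Real.log (b / a) ≤ ∫ t in a..b, A t ^ 2 / t := by
    intro c a b ha hab hc hcA
    have h0 : (0:ℝ) ∉ Set.uIcc a b := by
      rw [Set.uIcc_of_le hab]
      exact fun h => absurd h.1 (not_le.mpr ha)
    have hg : IntervalIntegrable (fun t => c ^ 2 * (1 / t)) volume a b := by
      apply ContinuousOn.intervalIntegrable
      exact continuousOn_const.mul (continuousOn_const.div continuousOn_id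
        fun t ht => ne_of_gt (by rw [Set.uIcc_of_le hab] at ht; exact ha.trans_le ht.1))
    calc c ^ 2 * Real.log (b / a) = ∫ t in a..b, c ^ 2 * (1 / t) := by
          rw [intervalIntegral.integral_const_mul, integral_one_div h0]
      _ ≤ ∫ t in a..b, A t ^ 2 / t := by
          apply intervalIntegral.integral_mono_on hab hg (hII a b ha hab)
          intro t ht
          have htpos : 0 < t := ha.trans_le ht.1
          have h1 : c ^ 2 ≤ A t ^ 2 := pow_le_pow_left₀ hc (hcA t ht) 2
          rw [mul_one_div]
          exact div_le_div_of_nonneg_right h1 htpos.le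
  -- main step: F b ≥ F a + κ² F a² log(b/a)
  have hL1 : ∀ a b : ℝ, 0 < a → a ≤ b →
      F a + κ ^ 2 * F a ^ 2 * Real.log (b / a) ≤ F b := by
    intro a b ha hab
    rw [hsplit a b ha hab]
    have : (κ * F a) ^ 2 * Real.log (b / a) ≤ ∫ t in a..b, A t ^ 2 / t := by
      apply hlow (κ * F a) a b ha hab (mul_nonneg hκ.le (hFnn a ha))
      intro t ht
      have htpos : 0 < t := ha.trans_le ht.1
      calc κ * F a ≤ κ * F t := by
            exact mul_le_mul_of_nonneg_left (hFmono a t ha ht.1) hκ.le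
        _ ≤ A t := hineq t htpos
    nlinarith [this]
  -- suppose A r > 0, derive contradiction
  by_contra hne
  have hApos : 0 < A r := lt_of_le_of_ne (hAnn r) (Ne.symm hne)
  set a : ℝ := 2 * r with hadef
  have ha : 0 < a := by positivity
  have hFa : 0 < F a := by
    have h1 : A r ^ 2 * Real.log (a / r) ≤ ∫ t in r..a, A t ^ 2 / t := by
      have := hlow (A r) r a hr (by linarith) (hAnn r) (fun t ht => hAmono ht.1)
      simpa using this
    have hloga : Real.log (a / r) = Real.log 2 := by
      rw [hadef]; rw [mul_div_assoc, div_self (ne_of_gt hr)]; ring_nf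
    have hlog2 : 0 < Real.log 2 := Real.log_pos (by norm_num)
    have h2 : F a = F r + ∫ t in r..a, A t ^ 2 / t := hsplit r a hr (by linarith)
    have h3 : 0 < A r ^ 2 * Real.log (a / r) := by
      rw [hloga]; positivity
    have := hFnn r hr
    linarith
  set D : ℝ := 4 / (κ ^ 2 * F a) with hDdef
  have hD : 0 < D := by positivity
  set rs : ℕ → ℝ := fun k => a * Real.exp (D * (1 - (1/2:ℝ) ^ k)) with hrs
  have hrspos : ∀ k, 0 < rs k := fun k => mul_pos ha (Real.exp_pos _)
  have hrsa : ∀ k, a ≤ rs k := by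
    intro k
    have h0 : (0:ℝ) ≤ D * (1 - (1/2:ℝ) ^ k) := by
      have : (1/2:ℝ) ^ k ≤ 1 := pow_le_one₀ (by norm_num) (by norm_num)
      nlinarith
    exact le_mul_of_one_le_right ha.le (Real.one_le_exp h0)
  have hrsmono : ∀ k, rs k ≤ rs (k+1) := by
    intro k
    apply mul_le_mul_of_nonneg_left _ ha.le
    apply Real.exp_le_exp.mpr
    have : (1/2:ℝ) ^ (k+1) ≤ (1/2:ℝ) ^ k :=
      pow_le_pow_of_le_one (by norm_num) (by norm_num) (Nat.le_succ k)
    nlinarith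
  have hrslog : ∀ k, Real.log (rs (k+1) / rs k) = (2 / (κ ^ 2 * F a)) * (1/2:ℝ) ^ k := by
    intro k
    have h1 : rs (k+1) / rs k =
        Real.exp (D * (1 - (1/2:ℝ) ^ (k+1))) / Real.exp (D * (1 - (1/2:ℝ) ^ k)) := by
      rw [hrs]
      field_simp
    rw [h1, ← Real.exp_sub, Real.log_exp, hDdef]
    have hp : (1/2:ℝ) ^ (k+1) = (1/2:ℝ) ^ k / 2 := by rw [pow_succ]; ring
    rw [hp]; ring
  have hRbound : ∀ k, rs k ≤ a * Real.exp D := by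
    intro k
    apply mul_le_mul_of_nonneg_left _ ha.le
    apply Real.exp_le_exp.mpr
    have : (0:ℝ) ≤ (1/2:ℝ) ^ k := by positivity
    nlinarith
  set R : ℝ := a * Real.exp D with hRdef
  have hRpos : 0 < R := mul_pos ha (Real.exp_pos _)
  have hgrow : ∀ k, 2 ^ k * F a ≤ F (rs k) := by
    intro k
    induction k with
    | zero =>
      have : rs 0 = a := by rw [hrs]; simp
      rw [this]; norm_num
    | succ k ih =>
      have h1 := hL1 (rs k) (rs (k+1)) (hrspos k) (hrsmono k)
      rw [hrslog k] at h1
      have hFk : 2 ^ k * F a ≤ F (rs k) := ih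
      have hFknn : 0 ≤ F (rs k) := le_trans (by positivity) hFk
      have hpk : (0:ℝ) < (1/2:ℝ) ^ k := by positivity
      have h2k : (2:ℝ) ^ k * (1/2:ℝ) ^ k = 1 := by
        rw [← mul_pow]; norm_num
      have key : 2 * (2 ^ k * F a) ≤ κ ^ 2 * F (rs k) ^ 2 * ((2 / (κ ^ 2 * F a)) * (1/2:ℝ) ^ k) := by
        have e1 : κ ^ 2 * F (rs k) ^ 2 * ((2 / (κ ^ 2 * F a)) * (1/2:ℝ) ^ k)
            = 2 * F (rs k) ^ 2 * (1/2:ℝ) ^ k / F a := by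
          field_simp
        rw [e1, le_div_iff₀ hFa]
        have h3 : (2 ^ k * F a) ^ 2 ≤ F (rs k) ^ 2 := pow_le_pow_left₀ (by positivity) hFk 2
        have h5 := mul_le_mul_of_nonneg_right h3 hpk.le
        have e2 : ((2:ℝ) ^ k * F a) ^ 2 * (1/2:ℝ) ^ k = 2 ^ k * F a ^ 2 := by
          linear_combination ((2:ℝ) ^ k * F a ^ 2) * h2k
        nlinarith [h5, e2]
      have hp2 : (0:ℝ) ≤ 2 ^ k * F a := by positivity
      calc (2:ℝ) ^ (k+1) * F a = 2 * (2 ^ k * F a) := by ring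
        _ ≤ 2 ^ k * F a + 2 * (2 ^ k * F a) := by linarith
        _ ≤ F (rs k) + κ ^ 2 * F (rs k) ^ 2 * ((2 / (κ ^ 2 * F a)) * (1/2:ℝ) ^ k) := by
            linarith
        _ ≤ F (rs (k+1)) := h1
  -- contradiction: F R bounded but 2^k F a → ∞
  obtain ⟨n, hn⟩ := exists_nat_gt (F R / F a)
  have hFR : 2 ^ n * F a ≤ F R :=
    le_trans (hgrow n) (hFmono (rs n) R (hrspos n) (hRbound n))
  have h2n : (n:ℝ) < 2 ^ n := by
    exact_mod_cast Nat.lt_two_pow_self (n := n)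
  have : F R / F a < 2 ^ n := lt_trans hn h2n
  rw [div_lt_iff₀ hFa] at this
  linarith
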